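/- Let n ∈ ℕ with n > 1 and let γ₁,…,γₙ ∈ ℝ satisfy 0 ≤ γᵢ ≤ 1/2 for all i, with at least one γᵢ ≠ 0. Let Ṽ = Ṽ_{γ₁,…,γₙ} be the normalised gonosomal operator, and set R = {(x₁,…,xₙ,u) ∈ S^{n,1} : γᵢ xᵢ > 0 for some i} and T = {(x₁,…,xₙ,u) ∈ S^{n,1} : (1−2γᵢ) xᵢ > 0 for some i}. If γ₁ > 0, then R is the largest subset of S^{n,1} invariant under Ṽ: Ṽ(R) ⊆ R, and every U ⊆ S^{n,1} with Ṽ(U) ⊆ U satisfies U ⊆ R. If γ₁ = 0, then R ∩ T is the largest subset of S^{n,1} invariant under Ṽ: Ṽ(R ∩ T) ⊆ R ∩ T, and every U ⊆ S^{n,1} with Ṽ(U) ⊆ U satisfies U ⊆ R ∩ T. -/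
import Mathlib


open Finset

/-- The gonosomal operator with a single male genotype and parameters `γ₁,…,γₙ`,
acting on pairs `(x, u)` with `x : Fin n → ℝ` the female genotype frequencies and
`u : ℝ` the male genotype frequency.  The coordinate of index `0` plays the role
of `x₁`. -/
noncomputable def gonOp (n : ℕ) (γ : Fin n → ℝ) (p : (Fin n → ℝ) × ℝ) :
    (Fin n → ℝ) × ℝ :=
  (fun j =>
    if (j : ℕ) = 0 then p.2 * ∑ i, γ i * p.1 i
    else p.2 * ∑ i, ((1 - 2 * γ i) / ((n : ℝ) - 1)) * p.1 i,
   p.2 * ∑ i, γ i * p.1 i)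

/-- The normalised gonosomal operator with parameters `γ₁,…,γₙ`. -/
noncomputable def ngonOp (n : ℕ) (γ : Fin n → ℝ) (p : (Fin n → ℝ) × ℝ) :
    (Fin n → ℝ) × ℝ :=
  (fun j =>
    if (j : ℕ) = 0 then (∑ i, γ i * p.1 i) / (∑ i, p.1 i)
    else (∑ i, (1 - 2 * γ i) * p.1 i) / (((n : ℝ) - 1) * ∑ i, p.1 i),
   (∑ i, γ i * p.1 i) / (∑ i, p.1 i))

/-- The set `S^{n,1}` of frequency distributions. -/
def Sn1 (n : ℕ) : Set ((Fin n → ℝ) × ℝ) :=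
  {p | (∀ i, 0 ≤ p.1 i) ∧ 0 ≤ p.2 ∧ 0 < ∑ i, p.1 i ∧ 0 < p.2 ∧ (∑ i, p.1 i) + p.2 = 1}

lemma sum_if_fin (n : ℕ) (hn : 0 < n) (a b : ℝ) :
    ∑ j : Fin n, (if (j : ℕ) = 0 then a else b) = a + ((n : ℝ) - 1) * b := by
  have hz : (⟨0, hn⟩ : Fin n) ∈ Finset.univ := Finset.mem_univ _
  rw [← Finset.add_sum_erase _ _ hz]
  have h1 : ∑ j ∈ Finset.univ.erase (⟨0, hn⟩ : Fin n), (if (j:ℕ) = 0 then a else b)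
      = ∑ _j ∈ Finset.univ.erase (⟨0, hn⟩ : Fin n), b := by
    apply Finset.sum_congr rfl
    intro j hj
    rw [if_neg]
    intro h
    exact (Finset.mem_erase.mp hj).1 (Fin.ext h)
  rw [h1, Finset.sum_const, Finset.card_erase_of_mem hz, Finset.card_univ, Fintype.card_fin]
  simp [nsmul_eq_mul, Nat.cast_sub hn]

lemma ngonOp_mem_Sn1 (n : ℕ) (hn : 1 < n) (γ : Fin n → ℝ)
    (hγ : ∀ i, 0 ≤ γ i ∧ γ i ≤ 1 / 2) (p : (Fin n → ℝ) × ℝ) (hp : p ∈ Sn1 n)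
    (hSγ : 0 < ∑ i, γ i * p.1 i) :
    ngonOp n γ p ∈ Sn1 n := by
  obtain ⟨hx, hu, hα, hu', hsum⟩ := hp
  set α := ∑ i, p.1 i with hαdef
  set Sγ := ∑ i, γ i * p.1 i with hSγdef
  set Sβ := ∑ i, (1 - 2 * γ i) * p.1 i with hSβdef
  have hn1 : (0:ℝ) < (n:ℝ) - 1 := by
    have : (1:ℝ) < (n:ℝ) := by exact_mod_cast hn
    linarith
  have hSβ0 : 0 ≤ Sβ := Finset.sum_nonneg fun i _ => by
    have := (hγ i).2; have := hx i; nlinarith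
  have hid : 2 * Sγ + Sβ = α := by
    rw [hSγdef, hSβdef, hαdef, Finset.mul_sum, ← Finset.sum_add_distrib]
    apply Finset.sum_congr rfl
    intro i _; ring
  have hdiv : 0 < Sγ / α := div_pos hSγ hα
  have hdivβ : 0 ≤ Sβ / (((n:ℝ)-1) * α) := div_nonneg hSβ0 (by positivity)
  have hsum' : ∑ j, (ngonOp n γ p).1 j = Sγ/α + ((n:ℝ)-1) * (Sβ / (((n:ℝ)-1)*α)) := by
    simp only [ngonOp]
    exact sum_if_fin n (by omega) _ _
  have hmul : ((n:ℝ)-1) * (Sβ / (((n:ℝ)-1)*α)) = Sβ / α := by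
    field_simp
  refine ⟨fun i => ?_, le_of_lt hdiv, ?_, hdiv, ?_⟩
  · simp only [ngonOp]
    split
    · exact le_of_lt hdiv
    · exact hdivβ
  · rw [hsum', hmul]
    have : 0 ≤ Sβ / α := div_nonneg hSβ0 (le_of_lt hα)
    linarith
  · show (∑ j, (ngonOp n γ p).1 j) + Sγ/α = 1
    rw [hsum', hmul]
    field_simp
    linarith [hid]

/-- If the image of `p` lies in `S^{n,1}`, then some `γ i * x i` is positive. -/
lemma exists_pos_of_image_mem (n : ℕ) (γ : Fin n → ℝ) (hγ1 : ∀ i, 0 ≤ γ i)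
    (p : (Fin n → ℝ) × ℝ) (hx : ∀ i, 0 ≤ p.1 i) (h : ngonOp n γ p ∈ Sn1 n) :
    ∃ i, 0 < γ i * p.1 i := by
  by_contra hno
  push_neg at hno
  have hSγ0 : ∑ i, γ i * p.1 i = 0 :=
    Finset.sum_eq_zero fun i _ => le_antisymm (hno i) (mul_nonneg (hγ1 i) (hx i))
  have h2 := h.2.2.2.1
  simp only [ngonOp, hSγ0, zero_div] at h2
  exact lt_irrefl 0 h2

theorem ngonOp_largest_invariant (n : ℕ) (hn : 1 < n) (γ : Fin n → ℝ)
    (hγ : ∀ i, 0 ≤ γ i ∧ γ i ≤ 1 / 2) (hne : ∃ i, γ i ≠ 0) :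
    (0 < γ ⟨0, by omega⟩ →
      (∀ p ∈ {q ∈ Sn1 n | ∃ i, 0 < γ i * q.1 i},
          ngonOp n γ p ∈ {q ∈ Sn1 n | ∃ i, 0 < γ i * q.1 i}) ∧
      (∀ U ⊆ Sn1 n, (∀ p ∈ U, ngonOp n γ p ∈ U) →
          U ⊆ {q ∈ Sn1 n | ∃ i, 0 < γ i * q.1 i})) ∧
    (γ ⟨0, by omega⟩ = 0 →
      (∀ p ∈ {q ∈ Sn1 n | ∃ i, 0 < γ i * q.1 i} ∩
            {q ∈ Sn1 n | ∃ i, 0 < (1 - 2 * γ i) * q.1 i},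
          ngonOp n γ p ∈ {q ∈ Sn1 n | ∃ i, 0 < γ i * q.1 i} ∩
            {q ∈ Sn1 n | ∃ i, 0 < (1 - 2 * γ i) * q.1 i}) ∧
      (∀ U ⊆ Sn1 n, (∀ p ∈ U, ngonOp n γ p ∈ U) →
          U ⊆ {q ∈ Sn1 n | ∃ i, 0 < γ i * q.1 i} ∩
            {q ∈ Sn1 n | ∃ i, 0 < (1 - 2 * γ i) * q.1 i})) := by
  have h0 : 0 < n := by omega
  have hn1 : (0:ℝ) < (n:ℝ) - 1 := by
    have : (1:ℝ) < (n:ℝ) := by exact_mod_cast hn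
    linarith
  constructor
  · -- case γ₀ > 0
    intro hγ0
    constructor
    · rintro p ⟨hp, i, hi⟩
      have hα : 0 < ∑ i, p.1 i := hp.2.2.1
      have hSγ : 0 < ∑ i, γ i * p.1 i :=
        lt_of_lt_of_le hi (Finset.single_le_sum
          (f := fun j => γ j * p.1 j)
          (fun j _ => mul_nonneg (hγ j).1 (hp.1 j)) (Finset.mem_univ i))
      refine ⟨ngonOp_mem_Sn1 n hn γ hγ p hp hSγ, ⟨0, h0⟩, ?_⟩
      have hx0 : (ngonOp n γ p).1 ⟨0, h0⟩ = (∑ i, γ i * p.1 i) / (∑ i, p.1 i) := by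
        simp [ngonOp]
      rw [hx0]
      exact mul_pos hγ0 (div_pos hSγ hα)
    · intro U hU hinv p hp
      exact ⟨hU hp, exists_pos_of_image_mem n γ (fun i => (hγ i).1) p (hU hp).1
        (hU (hinv p hp))⟩
  · -- case γ₀ = 0
    intro hγ0
    constructor
    · rintro p ⟨⟨hp, i, hi⟩, -, k, hk⟩
      have hα : 0 < ∑ i, p.1 i := hp.2.2.1
      have hSγ : 0 < ∑ i, γ i * p.1 i :=
        lt_of_lt_of_le hi (Finset.single_le_sum
          (f := fun j => γ j * p.1 j)
          (fun j _ => mul_nonneg (hγ j).1 (hp.1 j)) (Finset.mem_univ i))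
      have hSβ : 0 < ∑ i, (1 - 2 * γ i) * p.1 i :=
        lt_of_lt_of_le hk (Finset.single_le_sum
          (f := fun j => (1 - 2 * γ j) * p.1 j)
          (fun j _ => mul_nonneg (by have := (hγ j).2; linarith) (hp.1 j))
          (Finset.mem_univ k))
      have hmem := ngonOp_mem_Sn1 n hn γ hγ p hp hSγ
      have hxpos : ∀ j, 0 < (ngonOp n γ p).1 j := by
        intro j
        simp only [ngonOp]
        split
        · exact div_pos hSγ hα
        · exact div_pos hSβ (mul_pos hn1 hα)
      obtain ⟨m, hm⟩ := hne
      have hγm : 0 < γ m := lt_of_le_of_ne (hγ m).1 (Ne.symm hm)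
      refine ⟨⟨hmem, m, mul_pos hγm (hxpos m)⟩, hmem, ⟨0, h0⟩, ?_⟩
      have hz : γ (⟨0, h0⟩ : Fin n) = 0 := hγ0
      rw [hz]
      simpa using hxpos ⟨0, h0⟩
    · intro U hU hinv p hp
      have hpS := hU hp
      have hR : ∃ i, 0 < γ i * p.1 i :=
        exists_pos_of_image_mem n γ (fun i => (hγ i).1) p hpS.1 (hU (hinv p hp))
      refine ⟨⟨hpS, hR⟩, hpS, ?_⟩
      by_contra hno
      push_neg at hno
      have hSβ0 : ∑ i, (1 - 2 * γ i) * p.1 i = 0 :=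
        Finset.sum_eq_zero fun i _ => le_antisymm (hno i)
          (mul_nonneg (by have := (hγ i).2; linarith) (hpS.1 i))
      have hterm : ∀ i, γ i * (ngonOp n γ p).1 i = 0 := by
        intro i
        simp only [ngonOp]
        split
        next h =>
          have hi0 : i = ⟨0, h0⟩ := Fin.ext h
          have hz : γ (⟨0, h0⟩ : Fin n) = 0 := hγ0
          rw [hi0, hz, zero_mul]
        next =>
          rw [hSβ0, zero_div, mul_zero]
      have hsum0 : ∑ i, γ i * (ngonOp n γ p).1 i = 0 :=
        Finset.sum_eq_zero fun i _ => hterm i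
      have h2 : 0 < (∑ i, γ i * (ngonOp n γ p).1 i) / (∑ j, (ngonOp n γ p).1 j) :=
        (hU (hinv _ (hinv p hp))).2.2.2.1
      rw [hsum0, zero_div] at h2
      exact lt_irrefl 0 h2
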